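/- If A and B are diversified formulas built only from letters with ∧ and ∨, and A ↔ B is a tautology, then A and B contain exactly the same set of letters and the same number of connective occurrences. -/
import Mathlib


inductive Form where
  | var : ℕ → Form
  | top : Form
  | bot : Form
  | neg : Form → Form
  | and : Form → Form → Form
  | or  : Form → Form → Form
deriving DecidableEq

namespace Form

def eval (v : ℕ → Bool) : Form → Bool
  | var n => v n
  | top => true
  | bot => false
  | neg A => !(A.eval v)
  | and A B => A.eval v && B.eval v
  | or A B => A.eval v || B.eval v

def letters : Form → Multiset ℕ
  | var n => {n}
  | top => 0
  | bot => 0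
  | neg A => A.letters
  | and A B => A.letters + B.letters
  | or A B => A.letters + B.letters

end Form

/-- `A ↔ B` is a tautology. -/
def TautEquiv (A B : Form) : Prop := ∀ v : ℕ → Bool, A.eval v = B.eval v

/-- `A` is a tautology. -/
def Taut (A : Form) : Prop := ∀ v : ℕ → Bool, A.eval v = true

/-- every letter occurs at most once -/
def Diversified (A : Form) : Prop := A.letters.Nodup

/-- built from letters using only ∧ and ∨ -/
def IsAndOr : Form → Prop
  | .var _ => True
  | .and A B => IsAndOr A ∧ IsAndOr B
  | .or A B => IsAndOr A ∧ IsAndOr B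
  | _ => False

/-- number of occurrences of ∧ and ∨ -/
def Form.conn : Form → ℕ
  | .var _ => 0
  | .top => 0
  | .bot => 0
  | .neg A => A.conn
  | .and A B => A.conn + B.conn + 1
  | .or A B => A.conn + B.conn + 1

lemma eval_congr (A : Form) (v w : ℕ → Bool)
    (h : ∀ m ∈ A.letters, v m = w m) : A.eval v = A.eval w := by
  induction A with
  | var n => exact h n (by simp [Form.letters])
  | top => rfl
  | bot => rfl
  | neg A ih => simp only [Form.eval]; rw [ih h]
  | and A B ihA ihB =>
      simp only [Form.eval]
      rw [ihA fun m hm => h m (by simp [Form.letters, hm]),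
        ihB fun m hm => h m (by simp [Form.letters, hm])]
  | or A B ihA ihB =>
      simp only [Form.eval]
      rw [ihA fun m hm => h m (by simp [Form.letters, hm]),
        ihB fun m hm => h m (by simp [Form.letters, hm])]

lemma eval_const (A : Form) (hA : IsAndOr A) (b : Bool) (v : ℕ → Bool)
    (h : ∀ m ∈ A.letters, v m = b) : A.eval v = b := by
  induction A with
  | var n => exact h n (by simp [Form.letters])
  | top => exact absurd hA (by simp [IsAndOr])
  | bot => exact absurd hA (by simp [IsAndOr])
  | neg A ih => exact absurd hA (by simp [IsAndOr])
  | and A B ihA ihB =>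
      simp only [Form.eval]
      rw [ihA hA.1 fun m hm => h m (by simp [Form.letters, hm]),
        ihB hA.2 fun m hm => h m (by simp [Form.letters, hm])]
      cases b <;> simp
  | or A B ihA ihB =>
      simp only [Form.eval]
      rw [ihA hA.1 fun m hm => h m (by simp [Form.letters, hm]),
        ihB hA.2 fun m hm => h m (by simp [Form.letters, hm])]
      cases b <;> simp

lemma card_letters (A : Form) (hA : IsAndOr A) :
    Multiset.card A.letters = A.conn + 1 := by
  induction A with
  | var n => simp [Form.letters, Form.conn]
  | top => exact absurd hA (by simp [IsAndOr])
  | bot => exact absurd hA (by simp [IsAndOr])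
  | neg A ih => exact absurd hA (by simp [IsAndOr])
  | and A B ihA ihB =>
      simp only [Form.letters, Form.conn, Multiset.card_add, ihA hA.1, ihB hA.2]
      omega
  | or A B ihA ihB =>
      simp only [Form.letters, Form.conn, Multiset.card_add, ihA hA.1, ihB hA.2]
      omega

lemma relevant (A : Form) (hA : IsAndOr A) (hd : Diversified A) (n : ℕ)
    (hn : n ∈ A.letters) :
    ∃ v : ℕ → Bool, ∀ b, A.eval (Function.update v n b) = b := by
  induction A with
  | var m =>
      simp only [Form.letters, Multiset.mem_singleton] at hn
      subst hn
      exact ⟨fun _ => true, fun b => by simp [Form.eval]⟩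
  | top => simp [Form.letters] at hn
  | bot => simp [Form.letters] at hn
  | neg A ih => exact absurd hA (by simp [IsAndOr])
  | and A B ihA ihB =>
      have hd' : Diversified A ∧ Diversified B ∧ Disjoint A.letters B.letters := by
        have := hd
        simp only [Diversified, Form.letters, Multiset.nodup_add] at this
        exact this
      simp only [Form.letters, Multiset.mem_add] at hn
      rcases hn with hn | hn
      · obtain ⟨v, hv⟩ := ihA hA.1 hd'.1 hn
        refine ⟨fun m => if m ∈ B.letters then true else v m, fun b => ?_⟩
        simp only [Form.eval]
        have h1 : A.eval (Function.update (fun m => if m ∈ B.letters then true else v m) n b)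
            = A.eval (Function.update v n b) := by
          apply eval_congr
          intro m hm
          by_cases hmn : m = n
          · subst hmn; simp
          · have : m ∉ B.letters := fun hc => Multiset.disjoint_left.mp hd'.2.2 hm hc
            simp [Function.update, hmn, this]
        have h2 : B.eval (Function.update (fun m => if m ∈ B.letters then true else v m) n b)
            = true := by
          apply eval_const B hA.2
          intro m hm
          have hmn : m ≠ n := fun hc => Multiset.disjoint_left.mp hd'.2.2 hn (hc ▸ hm)
          simp [Function.update, hmn, hm]
        rw [h1, h2, hv b]
        cases b <;> simp
      · obtain ⟨v, hv⟩ := ihB hA.2 hd'.2.1 hn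
        refine ⟨fun m => if m ∈ A.letters then true else v m, fun b => ?_⟩
        simp only [Form.eval]
        have h1 : B.eval (Function.update (fun m => if m ∈ A.letters then true else v m) n b)
            = B.eval (Function.update v n b) := by
          apply eval_congr
          intro m hm
          by_cases hmn : m = n
          · subst hmn; simp
          · have : m ∉ A.letters := fun hc => Multiset.disjoint_left.mp hd'.2.2 hc hm
            simp [Function.update, hmn, this]
        have h2 : A.eval (Function.update (fun m => if m ∈ A.letters then true else v m) n b)
            = true := by
          apply eval_const A hA.1
          intro m hm
          have hmn : m ≠ n := fun hc => Multiset.disjoint_left.mp hd'.2.2 (hc ▸ hm) hn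
          simp [Function.update, hmn, hm]
        rw [h1, h2, hv b]
        cases b <;> simp
  | or A B ihA ihB =>
      have hd' : Diversified A ∧ Diversified B ∧ Disjoint A.letters B.letters := by
        have := hd
        simp only [Diversified, Form.letters, Multiset.nodup_add] at this
        exact this
      simp only [Form.letters, Multiset.mem_add] at hn
      rcases hn with hn | hn
      · obtain ⟨v, hv⟩ := ihA hA.1 hd'.1 hn
        refine ⟨fun m => if m ∈ B.letters then false else v m, fun b => ?_⟩
        simp only [Form.eval]
        have h1 : A.eval (Function.update (fun m => if m ∈ B.letters then false else v m) n b)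
            = A.eval (Function.update v n b) := by
          apply eval_congr
          intro m hm
          by_cases hmn : m = n
          · subst hmn; simp
          · have : m ∉ B.letters := fun hc => Multiset.disjoint_left.mp hd'.2.2 hm hc
            simp [Function.update, hmn, this]
        have h2 : B.eval (Function.update (fun m => if m ∈ B.letters then false else v m) n b)
            = false := by
          apply eval_const B hA.2
          intro m hm
          have hmn : m ≠ n := fun hc => Multiset.disjoint_left.mp hd'.2.2 hn (hc ▸ hm)
          simp [Function.update, hmn, hm]
        rw [h1, h2, hv b]
        cases b <;> simp
      · obtain ⟨v, hv⟩ := ihB hA.2 hd'.2.1 hn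
        refine ⟨fun m => if m ∈ A.letters then false else v m, fun b => ?_⟩
        simp only [Form.eval]
        have h1 : B.eval (Function.update (fun m => if m ∈ A.letters then false else v m) n b)
            = B.eval (Function.update v n b) := by
          apply eval_congr
          intro m hm
          by_cases hmn : m = n
          · subst hmn; simp
          · have : m ∉ A.letters := fun hc => Multiset.disjoint_left.mp hd'.2.2 hc hm
            simp [Function.update, hmn, this]
        have h2 : A.eval (Function.update (fun m => if m ∈ A.letters then false else v m) n b)
            = false := by
          apply eval_const A hA.1
          intro m hm
          have hmn : m ≠ n := fun hc => Multiset.disjoint_left.mp hd'.2.2 (hc ▸ hm) hn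
          simp [Function.update, hmn, hm]
        rw [h1, h2, hv b]
        cases b <;> simp

lemma letters_subset (A B : Form) (hAO : IsAndOr A) (hdA : Diversified A)
    (h : TautEquiv A B) (n : ℕ) (hn : n ∈ A.letters) : n ∈ B.letters := by
  by_contra hc
  obtain ⟨v, hv⟩ := relevant A hAO hdA n hn
  have hB : B.eval (Function.update v n true) = B.eval (Function.update v n false) := by
    apply eval_congr
    intro m hm
    have : m ≠ n := fun he => hc (he ▸ hm)
    simp [Function.update, this]
  have := (h (Function.update v n true)).trans
    (hB.trans (h (Function.update v n false)).symm)
  rw [hv true, hv false] at this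
  exact absurd this (by simp)

theorem stmt2 (A B : Form) (hAO : IsAndOr A) (hBO : IsAndOr B)
    (hdA : Diversified A) (hdB : Diversified B) (h : TautEquiv A B) :
    A.letters.toFinset = B.letters.toFinset ∧ A.conn = B.conn := by
  have h' : TautEquiv B A := fun v => (h v).symm
  have hfs : A.letters.toFinset = B.letters.toFinset := by
    ext n
    simp only [Multiset.mem_toFinset]
    exact ⟨letters_subset A B hAO hdA h n, letters_subset B A hBO hdB h' n⟩
  refine ⟨hfs, ?_⟩
  have hcA : Multiset.card A.letters = A.letters.toFinset.card :=
    (Multiset.toFinset_card_of_nodup hdA).symm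
  have hcB : Multiset.card B.letters = B.letters.toFinset.card :=
    (Multiset.toFinset_card_of_nodup hdB).symm
  have hcards : A.letters.toFinset.card = B.letters.toFinset.card := by rw [hfs]
  have := card_letters A hAO
  have := card_letters B hBO
  omega
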